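/- Two finitely generated residually finite groups have isomorphic profinite completions if and only if they have the same set of (isomorphism classes of) finite quotients. -/

import Mathlib

open Function

/-- Index set: finite-index normal subgroups. -/
def FIN (G : Type) [Group G] : Type := {N : Subgroup G // N.Normal ∧ N.FiniteIndex}

instance FIN.group {G : Type} [Group G] (N : FIN G) : Group (G ⧸ N.1) :=
  @QuotientGroup.Quotient.group G _ N.1 N.2.1

instance {G : Type} [Group G] (N : FIN G) : TopologicalSpace (G ⧸ N.1) := ⊥
instance {G : Type} [Group G] (N : FIN G) : DiscreteTopology (G ⧸ N.1) := ⟨rfl⟩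
instance {G : Type} [Group G] (N : FIN G) : IsTopologicalGroup (G ⧸ N.1) where
  continuous_mul := continuous_of_discreteTopology
  continuous_inv := continuous_of_discreteTopology

/-- Transition homomorphisms of the inverse system of finite quotients. -/
def transMap {G : Type} [Group G] (N M : FIN G) (h : N.1 ≤ M.1) : G ⧸ N.1 →* G ⧸ M.1 :=
  @QuotientGroup.map G G _ _ N.1 N.2.1 M.1 M.2.1 (MonoidHom.id G) (fun _ hx => h hx)

/-- The compatible families, as a subgroup of the product of all finite quotients. -/
def profiniteSG (G : Type) [Group G] : Subgroup (∀ N : FIN G, G ⧸ N.1) where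
  carrier := {x | ∀ (N M : FIN G) (h : N.1 ≤ M.1), transMap N M h (x N) = x M}
  one_mem' := by intro N M h; simp
  mul_mem' := by intro a b ha hb N M h; rw [Pi.mul_apply, Pi.mul_apply, map_mul, ha N M h, hb N M h]
  inv_mem' := by intro a ha N M h; rw [Pi.inv_apply, Pi.inv_apply, map_inv, ha N M h]

/-- The profinite completion of a group `G`: the inverse limit of its finite quotients. -/
abbrev ProfiniteCompletion (G : Type) [Group G] : Type := ↥(profiniteSG G)

/-- The canonical homomorphism from `G` to its profinite completion. -/
def toPC (G : Type) [Group G] : G →* ProfiniteCompletion G where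
  toFun g := ⟨fun N => QuotientGroup.mk g, by
    intro N M h
    have h1 := N.2.1; have h2 := M.2.1
    simp [transMap, QuotientGroup.map_mk]; rfl⟩
  map_one' := by apply Subtype.ext; funext N; rfl
  map_mul' := by intro a b; apply Subtype.ext; funext N; rfl

/-- A group is residually finite if nontrivial elements survive in some finite quotient. -/
def ResiduallyFinite (G : Type) [Group G] : Prop :=
  ∀ g : G, g ≠ 1 → ∃ N : Subgroup G, N.Normal ∧ N.FiniteIndex ∧ g ∉ N

/-- Two groups have the same finite quotients. -/
def SameFiniteQuotients (G H : Type) [Group G] [Group H] : Prop :=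
  ∀ (Q : Type) [Group Q] [Finite Q],
    (∃ f : G →* Q, Function.Surjective f) ↔ (∃ f : H →* Q, Function.Surjective f)

set_option linter.unusedVariables false


section Fin1
variable {A B : Type} [Group A] [Group B]

lemma finite_monoidHom (hA : Group.FG A) (Q : Type) [Group Q] [Finite Q] :
    Finite (A →* Q) := by
  obtain ⟨S, hS⟩ := hA.1
  have hinj : Function.Injective (fun f : A →* Q => (fun s : S => f s)) := by
    intro f g h
    exact MonoidHom.eq_of_eqOn_dense hS (fun x hx => congrFun h ⟨x, hx⟩)
  exact Finite.of_injective _ hinj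

/-- normal subgroups of finite index at most `n` -/
def nSet (A : Type) [Group A] (n : ℕ) : Set (Subgroup A) :=
  {N | N.Normal ∧ N.FiniteIndex ∧ N.index ≤ n}

lemma nSet_finite (hA : Group.FG A) (n : ℕ) : (nSet A n).Finite := by
  have hfin : Finite (A →* Equiv.Perm (Fin n)) := finite_monoidHom hA _
  have key : ∀ N : nSet A n, ∃ f : A →* Equiv.Perm (Fin n), f.ker = N.1 := by
    rintro ⟨N, hNorm, hFI, hle⟩
    haveI : N.FiniteIndex := hFI
    haveI : N.Normal := hNorm
    haveI : Finite (A ⧸ N) := N.finite_quotient_of_finiteIndex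
    haveI : Fintype (A ⧸ N) := Fintype.ofFinite _
    have hcard : Fintype.card (A ⧸ N) ≤ Fintype.card (Fin n) := by
      rw [Fintype.card_fin, ← Nat.card_eq_fintype_card, ← Subgroup.index_eq_card]
      exact hle
    obtain ⟨e⟩ := Function.Embedding.nonempty_of_card_le hcard
    refine ⟨(Equiv.Perm.viaEmbeddingHom e).comp (MulAction.toPermHom A (A ⧸ N)), ?_⟩
    have : ((Equiv.Perm.viaEmbeddingHom e).comp (MulAction.toPermHom A (A ⧸ N))).ker
        = (MulAction.toPermHom A (A ⧸ N)).ker := by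
      ext x
      simp only [MonoidHom.mem_ker, MonoidHom.comp_apply]
      constructor
      · intro hx
        apply Equiv.Perm.viaEmbeddingHom_injective e
        rw [hx, map_one]
      · intro hx; rw [hx, map_one]
    rw [this, ← Subgroup.normalCore_eq_ker, Subgroup.normalCore_eq_self]
  choose F hF using key
  have hinjF : Function.Injective F := by
    intro N M h
    apply Subtype.ext
    rw [← hF N, ← hF M, h]
  rw [← Set.finite_coe_iff]
  exact Finite.of_injective F hinjF

end Fin1


section K
variable {A B : Type} [Group A] [Group B]

def Kgrp (A : Type) [Group A] (n : ℕ) : Subgroup A := sInf (nSet A n)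

lemma Kgrp_normal (n : ℕ) : (Kgrp A n).Normal := by
  constructor
  intro a ha g
  rw [Kgrp, Subgroup.mem_sInf] at ha ⊢
  intro N hN
  exact hN.1.conj_mem a (ha N hN) g

lemma Kgrp_le_of_mem {N : Subgroup A} {n : ℕ} (h : N ∈ nSet A n) : Kgrp A n ≤ N :=
  sInf_le h

lemma Kgrp_finiteIndex (hA : Group.FG A) (n : ℕ) : (Kgrp A n).FiniteIndex := by
  have hfin := nSet_finite hA n
  haveI : Finite (nSet A n) := hfin
  rw [Kgrp, sInf_eq_iInf']
  exact Subgroup.finiteIndex_iInf fun i => i.2.2.1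

lemma Kgrp_anti {n m : ℕ} (h : n ≤ m) : Kgrp A m ≤ Kgrp A n :=
  sInf_le_sInf (fun N hN => ⟨hN.1, hN.2.1, hN.2.2.trans h⟩)

lemma Kgrp_le (N : Subgroup A) (h1 : N.Normal) (h2 : N.FiniteIndex) :
    Kgrp A N.index ≤ N :=
  sInf_le ⟨h1, h2, le_refl _⟩

lemma comap_mem_nSet {f : A →* B} (hf : Surjective f) {N : Subgroup B} {n : ℕ}
    (hN : N ∈ nSet B n) : N.comap f ∈ nSet A n := by
  refine ⟨hN.1.comap f, ⟨?_⟩, ?_⟩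
  · rw [Subgroup.index_comap_of_surjective _ hf]; exact hN.2.1.1
  · rw [Subgroup.index_comap_of_surjective _ hf]; exact hN.2.2

lemma Kgrp_le_comap {f : A →* B} (hf : Surjective f) (n : ℕ) :
    Kgrp A n ≤ (Kgrp B n).comap f := by
  intro a ha
  rw [Subgroup.mem_comap, Kgrp, Subgroup.mem_sInf]
  intro N hN
  have := Kgrp_le_of_mem (comap_mem_nSet hf hN) ha
  exact this

lemma comap_Kgrp {f : A →* B} (hf : Surjective f) {n : ℕ}
    (hker : ∀ N ∈ nSet A n, f.ker ≤ N) :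
    (Kgrp B n).comap f = Kgrp A n := by
  refine le_antisymm ?_ (Kgrp_le_comap hf n)
  intro a ha
  rw [Kgrp, Subgroup.mem_sInf]
  intro M hM
  have hmap : M.map f ∈ nSet B n := by
    refine ⟨hM.1.map f hf, ⟨?_⟩, ?_⟩
    · rw [Subgroup.index_map_eq _ hf (hker M hM)]; exact hM.2.1.1
    · rw [Subgroup.index_map_eq _ hf (hker M hM)]; exact hM.2.2
  have h1 : f a ∈ M.map f := Kgrp_le_of_mem hmap (Subgroup.mem_comap.mp ha)
  have h2 : a ∈ (M.map f).comap f := Subgroup.mem_comap.mpr h1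
  rwa [Subgroup.comap_map_eq_self (hker M hM)] at h2

lemma map_Kgrp {f : A →* B} (hf : Surjective f) {n : ℕ}
    (hker : ∀ N ∈ nSet A n, f.ker ≤ N) :
    (Kgrp A n).map f = Kgrp B n := by
  rw [← comap_Kgrp hf hker, Subgroup.map_comap_eq_self_of_surjective hf]

end K
set_option linter.unusedVariables false

instance FIN.finite {G : Type} [Group G] (N : FIN G) : Finite (G ⧸ N.1) :=
  @Subgroup.finite_quotient_of_finiteIndex G _ N.1 N.2.2

/-- The quotient map as a `MonoidHom`, for `N : FIN G`. -/
def mkFIN {G : Type} [Group G] (N : FIN G) : G →* G ⧸ N.1 :=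
  @QuotientGroup.mk' G _ N.1 N.2.1

lemma mkFIN_apply {G : Type} [Group G] (N : FIN G) (g : G) :
    mkFIN N g = QuotientGroup.mk g := rfl

lemma mkFIN_surjective {G : Type} [Group G] (N : FIN G) : Surjective (mkFIN N) :=
  fun x => QuotientGroup.induction_on x (fun g => ⟨g, rfl⟩)

lemma mkFIN_ker {G : Type} [Group G] (N : FIN G) : (mkFIN N).ker = N.1 :=
  @QuotientGroup.ker_mk' G _ N.1 N.2.1

lemma transMap_mk {G : Type} [Group G] (N M : FIN G) (h : N.1 ≤ M.1) (g : G) :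
    transMap N M h (QuotientGroup.mk g) = QuotientGroup.mk g := rfl

lemma transMap_transMap {G : Type} [Group G] (N M P : FIN G) (h : N.1 ≤ M.1)
    (h' : M.1 ≤ P.1) (x : G ⧸ N.1) :
    transMap M P h' (transMap N M h x) = transMap N P (h.trans h') x := by
  refine QuotientGroup.induction_on x (fun g => ?_)
  rfl

lemma transMap_self {G : Type} [Group G] (N : FIN G) (h : N.1 ≤ N.1) (x : G ⧸ N.1) :
    transMap N N h x = x := by
  refine QuotientGroup.induction_on x (fun g => ?_)
  rfl

lemma transMap_surjective {G : Type} [Group G] (N M : FIN G) (h : N.1 ≤ M.1) :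
    Surjective (transMap N M h) :=
  fun x => QuotientGroup.induction_on x (fun g => ⟨QuotientGroup.mk g, rfl⟩)
lemma ker_transMap {G : Type} [Group G] (N M : FIN G) (h : N.1 ≤ M.1) :
    (transMap N M h).ker = M.1.map (mkFIN N) := by
  ext x
  refine QuotientGroup.induction_on x (fun a => ?_)
  haveI := M.2.1
  rw [MonoidHom.mem_ker, transMap_mk, QuotientGroup.eq_one_iff]
  simp only [Subgroup.mem_map, mkFIN_apply]
  constructor
  · intro ha; exact ⟨a, ha, rfl⟩
  · rintro ⟨y, hy, hya⟩
    have h1 : y⁻¹ * a ∈ N.1 := QuotientGroup.eq.mp hya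
    have h2 := mul_mem hy (h h1)
    rwa [mul_inv_cancel_left] at h2

/-- The sequence of intersections as elements of `FIN`. -/
def KF (A : Type) [Group A] (hA : Group.FG A) (n : ℕ) : FIN A :=
  ⟨Kgrp A n, Kgrp_normal n, Kgrp_finiteIndex hA n⟩

section KFsec
variable {A : Type} [Group A] (hA : Group.FG A)

@[simp] lemma KF_coe (n : ℕ) : (KF A hA n).1 = Kgrp A n := rfl

lemma map_mk_Kgrp {n m : ℕ} (h : n ≤ m) :
    (Kgrp A n).map (mkFIN (KF A hA m)) = Kgrp (A ⧸ (KF A hA m).1) n := by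
  refine map_Kgrp (mkFIN_surjective _) (fun N hN => ?_)
  rw [mkFIN_ker]
  exact (Kgrp_anti h).trans (Kgrp_le_of_mem hN)

lemma Kgrp_quot_self_bot (n : ℕ) : Kgrp (A ⧸ (KF A hA n).1) n = ⊥ := by
  rw [← map_mk_Kgrp hA (le_refl n), Subgroup.map_eq_bot_iff, mkFIN_ker, KF_coe]

lemma ker_transMap_KF {n m : ℕ} (h : n ≤ m) :
    (transMap (KF A hA m) (KF A hA n) (Kgrp_anti h)).ker
      = Kgrp (A ⧸ (KF A hA m).1) n := by
  exact (ker_transMap _ _ _).trans (map_mk_Kgrp hA h)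

end KFsec
lemma MonoidHomKerComp {A B C : Type} [Group A] [Group B] [Group C]
    (f : A →* B) (g : B →* C) : (g.comp f).ker = g.ker.comap f := rfl

section Funct
variable (G H : Type) [Group G] [Group H]

/-- Surjective homomorphisms `G → H/K_H(n)` with kernel `K_G(n)`. -/
def Fobj (hH : Group.FG H) (n : ℕ) : Type :=
  {f : G →* H ⧸ (KF H hH n).1 // Surjective f ∧ f.ker = Kgrp G n}

lemma Fobj_finite (hG : Group.FG G) (hH : Group.FG H) (n : ℕ) :
    Finite (Fobj G H hH n) := by
  haveI := finite_monoidHom hG (H ⧸ (KF H hH n).1)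
  exact Subtype.finite

lemma Fobj_nonempty (hG : Group.FG G) (hH : Group.FG H)
    (sfq : SameFiniteQuotients G H) (n : ℕ) :
    Nonempty (Fobj G H hH n) := by
  haveI h1 : (KF G hG n).1.Normal := (KF G hG n).2.1
  haveI h2 : (KF H hH n).1.Normal := (KF H hH n).2.1
  haveI h3 : (Kgrp G n).Normal := Kgrp_normal n
  obtain ⟨fG, hfG⟩ := (sfq (H ⧸ (KF H hH n).1)).mpr ⟨mkFIN _, mkFIN_surjective _⟩
  obtain ⟨fH, hfH⟩ := (sfq (G ⧸ (KF G hG n).1)).mp ⟨mkFIN _, mkFIN_surjective _⟩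
  have hKer1 : (KF G hG n).1 ≤ fG.ker := by
    intro g hg
    have h1 := Kgrp_le_comap hfG n hg
    rw [Kgrp_quot_self_bot hH n] at h1
    exact h1
  have hKer2 : (KF H hH n).1 ≤ fH.ker := by
    intro g hg
    have h1 := Kgrp_le_comap hfH n hg
    rw [Kgrp_quot_self_bot hG n] at h1
    exact h1
  set fGbar := QuotientGroup.lift (KF G hG n).1 fG hKer1 with hfGbar
  set fHbar := QuotientGroup.lift (KF H hH n).1 fH hKer2 with hfHbar
  have hsurj1 : Surjective fGbar := by
    intro y
    obtain ⟨g, hg⟩ := hfG y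
    exact ⟨QuotientGroup.mk g, by rwa [hfGbar, QuotientGroup.lift_mk]⟩
  have hsurj2 : Surjective fHbar := by
    intro y
    obtain ⟨g, hg⟩ := hfH y
    exact ⟨QuotientGroup.mk g, by rwa [hfHbar, QuotientGroup.lift_mk]⟩
  have hcard : Nat.card (G ⧸ (KF G hG n).1) = Nat.card (H ⧸ (KF H hH n).1) :=
    le_antisymm (Nat.card_le_card_of_surjective fHbar hsurj2)
      (Nat.card_le_card_of_surjective fGbar hsurj1)
  have hbij : Bijective fGbar :=
    (Nat.bijective_iff_surjective_and_card fGbar).mpr ⟨hsurj1, hcard⟩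
  refine ⟨fG, hfG, le_antisymm ?_ hKer1⟩
  intro g hg
  have hq1 : fGbar (QuotientGroup.mk g) = fGbar 1 := by
    rw [hfGbar, QuotientGroup.lift_mk, map_one]
    exact hg
  have hq2 := hbij.injective hq1
  rwa [← QuotientGroup.eq_one_iff g]

def Fmap (hH : Group.FG H) {n m : ℕ} (h : n ≤ m) (f : Fobj G H hH m) :
    Fobj G H hH n := by
  refine ⟨(transMap (KF H hH m) (KF H hH n) (Kgrp_anti h)).comp f.1, ?_, ?_⟩
  · exact (transMap_surjective (KF H hH m) (KF H hH n) (Kgrp_anti h)).comp f.2.1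
  · rw [MonoidHomKerComp, ker_transMap_KF hH h]
    refine comap_Kgrp f.2.1 (fun N hN => ?_)
    rw [f.2.2]
    exact (Kgrp_anti h).trans (Kgrp_le_of_mem hN)

open CategoryTheory in
def Fnc (hH : Group.FG H) : ℕᵒᵖ ⥤ Type where
  obj n := Fobj G H hH n.unop
  map {n m} φ := TypeCat.ofHom (fun f => Fmap G H hH (leOfHom φ.unop) f)
  map_id := by
    intro n
    ext f
    apply Subtype.ext
    refine MonoidHom.ext (fun g => ?_)
    exact transMap_self (KF H hH n.unop) (Kgrp_anti (le_refl _)) (f.1 g)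
  map_comp := by
    intro n m p φ ψ
    ext f
    apply Subtype.ext
    refine MonoidHom.ext (fun g => ?_)
    exact (transMap_transMap (KF H hH n.unop) (KF H hH m.unop) (KF H hH p.unop)
      (Kgrp_anti (leOfHom φ.unop)) (Kgrp_anti (leOfHom ψ.unop)) (f.1 g)).symm

lemma exists_useq (hG : Group.FG G) (hH : Group.FG H)
    (sfq : SameFiniteQuotients G H) :
    ∃ u : ∀ n : ℕ, Fobj G H hH n,
      ∀ {n m : ℕ} (h : n ≤ m), Fmap G H hH h (u m) = u n := by
  haveI : ∀ j : ℕᵒᵖ, Finite ((Fnc G H hH).obj j) :=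
    fun j => Fobj_finite G H hG hH j.unop
  haveI : ∀ j : ℕᵒᵖ, Nonempty ((Fnc G H hH).obj j) :=
    fun j => Fobj_nonempty G H hG hH sfq j.unop
  obtain ⟨u, hu⟩ := nonempty_sections_of_finite_inverse_system (Fnc G H hH)
  refine ⟨fun n => u (Opposite.op n), ?_⟩
  intro n m h
  exact hu ((CategoryTheory.homOfLE h).op)

end Funct
section Build
variable {A B : Type} [Group A] [Group B]

/-- Compatibility of a family of maps between the cofinal quotient towers. -/
def Compat (hA : Group.FG A) (hB : Group.FG B)
    (θ : ∀ n, (A ⧸ (KF A hA n).1) →* (B ⧸ (KF B hB n).1)) : Prop :=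
  ∀ (n m : ℕ) (h : n ≤ m) (x : A ⧸ (KF A hA m).1),
    transMap (KF B hB m) (KF B hB n) (Kgrp_anti h) (θ m x)
      = θ n (transMap (KF A hA m) (KF A hA n) (Kgrp_anti h) x)

lemma KF_le (hB : Group.FG B) (M : FIN B) : (KF B hB M.1.index).1 ≤ M.1 :=
  Kgrp_le M.1 M.2.1 M.2.2

noncomputable def eFun (hA : Group.FG A) (hB : Group.FG B)
    (θ : ∀ n, (A ⧸ (KF A hA n).1) →* (B ⧸ (KF B hB n).1))
    (x : ProfiniteCompletion A) (M : FIN B) : B ⧸ M.1 :=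
  transMap (KF B hB M.1.index) M (KF_le hB M) (θ M.1.index (x.1 (KF A hA M.1.index)))

lemma push_eq (hA : Group.FG A) (hB : Group.FG B)
    (θ : ∀ n, (A ⧸ (KF A hA n).1) →* (B ⧸ (KF B hB n).1))
    (hθ : Compat hA hB θ) (x : ProfiniteCompletion A) {n p : ℕ} (hnp : n ≤ p)
    (M : FIN B) (hM : (KF B hB n).1 ≤ M.1) :
    transMap (KF B hB n) M hM (θ n (x.1 (KF A hA n)))
      = transMap (KF B hB p) M ((Kgrp_anti hnp).trans hM) (θ p (x.1 (KF A hA p))) := by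
  have hx := x.2 (KF A hA p) (KF A hA n) (Kgrp_anti hnp)
  rw [← hx, ← hθ n p hnp]; exact transMap_transMap _ _ _ _ _ _

lemma eFun_mem (hA : Group.FG A) (hB : Group.FG B)
    (θ : ∀ n, (A ⧸ (KF A hA n).1) →* (B ⧸ (KF B hB n).1))
    (hθ : Compat hA hB θ) (x : ProfiniteCompletion A) :
    eFun hA hB θ x ∈ profiniteSG B := by
  intro M M' hMM'
  show transMap M M' hMM' (eFun hA hB θ x M) = eFun hA hB θ x M'
  rw [eFun, eFun, transMap_transMap,
    push_eq hA hB θ hθ x (le_max_left M.1.index M'.1.index) M'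
      ((KF_le hB M).trans hMM'),
    push_eq hA hB θ hθ x (le_max_right M.1.index M'.1.index) M' (KF_le hB M')]

noncomputable def buildHom (hA : Group.FG A) (hB : Group.FG B)
    (θ : ∀ n, (A ⧸ (KF A hA n).1) →* (B ⧸ (KF B hB n).1))
    (hθ : Compat hA hB θ) :
    ProfiniteCompletion A →* ProfiniteCompletion B where
  toFun x := ⟨eFun hA hB θ x, eFun_mem hA hB θ hθ x⟩
  map_one' := by
    apply Subtype.ext
    funext M
    show transMap (KF B hB M.1.index) M (KF_le hB M)
        (θ M.1.index ((1 : ProfiniteCompletion A).1 (KF A hA M.1.index))) = 1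
    have h1 : (1 : ProfiniteCompletion A).1 (KF A hA M.1.index) = 1 := rfl
    rw [h1, map_one, map_one]
  map_mul' := by
    intro x y
    apply Subtype.ext
    funext M
    show transMap (KF B hB M.1.index) M (KF_le hB M)
        (θ M.1.index ((x * y).1 (KF A hA M.1.index)))
      = transMap (KF B hB M.1.index) M (KF_le hB M)
          (θ M.1.index (x.1 (KF A hA M.1.index)))
        * transMap (KF B hB M.1.index) M (KF_le hB M)
          (θ M.1.index (y.1 (KF A hA M.1.index)))
    have h1 : (x * y).1 (KF A hA M.1.index)
        = x.1 (KF A hA M.1.index) * y.1 (KF A hA M.1.index) := rfl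
    rw [h1, map_mul, map_mul]

lemma buildHom_apply (hA : Group.FG A) (hB : Group.FG B)
    (θ : ∀ n, (A ⧸ (KF A hA n).1) →* (B ⧸ (KF B hB n).1))
    (hθ : Compat hA hB θ) (x : ProfiniteCompletion A) (n : ℕ) :
    (buildHom hA hB θ hθ x).1 (KF B hB n) = θ n (x.1 (KF A hA n)) := by
  show eFun hA hB θ x (KF B hB n) = θ n (x.1 (KF A hA n))
  rw [eFun]
  set q := (KF B hB n).1.index with hq
  have h1 := push_eq hA hB θ hθ x (le_max_right n q) (KF B hB n) (KF_le hB (KF B hB n))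
  have h2 := push_eq hA hB θ hθ x (le_max_left n q) (KF B hB n) (le_refl (KF B hB n).1)
  exact h1.trans (h2.symm.trans (transMap_self _ _ _))

lemma buildHom_continuous (hA : Group.FG A) (hB : Group.FG B)
    (θ : ∀ n, (A ⧸ (KF A hA n).1) →* (B ⧸ (KF B hB n).1))
    (hθ : Compat hA hB θ) : Continuous (buildHom hA hB θ hθ) := by
  apply Continuous.subtype_mk
  apply continuous_pi
  intro M
  have h1 : (fun x : ProfiniteCompletion A => eFun hA hB θ x M)
      = (fun y : A ⧸ (KF A hA M.1.index).1 =>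
          transMap (KF B hB M.1.index) M (KF_le hB M) (θ M.1.index y))
        ∘ (fun x : ProfiniteCompletion A => x.1 (KF A hA M.1.index)) := rfl
  show Continuous (fun x : ProfiniteCompletion A => eFun hA hB θ x M)
  rw [h1]
  exact Continuous.comp continuous_of_discreteTopology
    ((continuous_apply _).comp continuous_subtype_val)

end Build
section Phi
variable {A B : Type} [Group A] [Group B]

noncomputable def phiOf (hA : Group.FG A) (hB : Group.FG B) (n : ℕ)
    (f : Fobj A B hB n) : (A ⧸ (KF A hA n).1) ≃* (B ⧸ (KF B hB n).1) := by
  haveI : (KF A hA n).1.Normal := (KF A hA n).2.1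
  refine MulEquiv.ofBijective
    (QuotientGroup.lift (KF A hA n).1 f.1 (le_of_eq f.2.2.symm)) ⟨?_, ?_⟩
  · rw [injective_iff_map_eq_one]
    intro x
    refine QuotientGroup.induction_on x (fun a => ?_)
    intro ha
    rw [QuotientGroup.lift_mk] at ha
    rw [QuotientGroup.eq_one_iff]
    have : a ∈ f.1.ker := ha
    rwa [f.2.2] at this
  · intro y
    obtain ⟨a, ha⟩ := f.2.1 y
    exact ⟨QuotientGroup.mk a, by rwa [QuotientGroup.lift_mk]⟩

lemma phiOf_mk (hA : Group.FG A) (hB : Group.FG B) (n : ℕ)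
    (f : Fobj A B hB n) (a : A) :
    phiOf hA hB n f (QuotientGroup.mk a) = f.1 a := rfl

end Phi

section Dense

lemma dense_toPC (G : Type) [Group G] (U : Set (ProfiniteCompletion G))
    (hU : IsOpen U) (hne : U.Nonempty) : ∃ g : G, toPC G g ∈ U := by
  obtain ⟨x, hx⟩ := hne
  obtain ⟨W, hW, hWU⟩ := isOpen_induced_iff.mp hU
  have hxW : x.1 ∈ W := by rw [← hWU] at hx; exact hx
  obtain ⟨I, u, h1, h2⟩ := isOpen_pi_iff.mp hW x.1 hxW
  have hnorm : (⨅ N ∈ I, N.1 : Subgroup G).Normal := by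
    constructor
    intro a ha g
    simp only [Subgroup.mem_iInf] at ha ⊢
    intro N hN
    exact N.2.1.conj_mem _ (ha N hN) _
  have hfi : (⨅ N ∈ I, N.1 : Subgroup G).FiniteIndex :=
    Subgroup.finiteIndex_iInf' (fun N : FIN G => N.1) (fun N _ => N.2.2)
  set N0 : FIN G := ⟨⨅ N ∈ I, N.1, hnorm, hfi⟩ with hN0
  obtain ⟨g, hg⟩ := mkFIN_surjective N0 (x.1 N0)
  refine ⟨g, ?_⟩
  rw [← hWU]
  refine h2 ?_
  rw [Set.mem_pi]
  intro i hi
  have hle : N0.1 ≤ i.1 := biInf_le (fun N : FIN G => N.1) hi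
  have key : (toPC G g).1 i = x.1 i := by
    have e1 : (toPC G g).1 i = QuotientGroup.mk g := rfl
    have e2 : transMap N0 i hle (mkFIN N0 g) = QuotientGroup.mk g :=
      transMap_mk N0 i hle g
    rw [e1, ← e2, hg]
    exact x.2 N0 i hle
  rw [key]
  exact (h1 i hi).2

def projPC {G : Type} [Group G] (N : FIN G) :
    ProfiniteCompletion G →* G ⧸ N.1 where
  toFun x := x.1 N
  map_one' := rfl
  map_mul' := fun x y => rfl

lemma transfer_aux {G H : Type} [Group G] [Group H]
    (e : ProfiniteCompletion G ≃* ProfiniteCompletion H)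
    (hec : Continuous e.symm) (Q : Type) [Group Q] [Finite Q]
    (N : FIN G) (eq1 : (G ⧸ N.1) ≃* Q) : ∃ f : H →* Q, Surjective f := by
  refine ⟨(eq1.toMonoidHom.comp ((projPC N).comp e.symm.toMonoidHom)).comp (toPC H), ?_⟩
  intro q
  obtain ⟨g₀, hg₀⟩ := mkFIN_surjective N (eq1.symm q)
  have hUopen : IsOpen ((fun y => (projPC N) (e.symm y)) ⁻¹' {eq1.symm q}) := by
    refine IsOpen.preimage ?_ (isOpen_discrete _)
    exact ((continuous_apply N).comp continuous_subtype_val).comp hec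
  have hUne : ((fun y => (projPC N) (e.symm y)) ⁻¹' {eq1.symm q}).Nonempty := by
    refine ⟨e (toPC G g₀), ?_⟩
    simp only [Set.mem_preimage, Set.mem_singleton_iff]
    rw [MulEquiv.symm_apply_apply]
    show (toPC G g₀).1 N = eq1.symm q
    have h3 : (toPC G g₀).1 N = QuotientGroup.mk g₀ := rfl
    rw [h3, ← mkFIN_apply, hg₀]
  obtain ⟨h, hh⟩ := dense_toPC H _ hUopen hUne
  refine ⟨h, ?_⟩
  have hmem : (projPC N) (e.symm (toPC H h)) = eq1.symm q :=
    Set.mem_singleton_iff.mp (Set.mem_preimage.mp hh)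
  show eq1 ((projPC N) (e.symm (toPC H h))) = q
  rw [hmem, MulEquiv.apply_symm_apply]

lemma transfer_quot {G H : Type} [Group G] [Group H]
    (e : ProfiniteCompletion G ≃* ProfiniteCompletion H)
    (hec : Continuous e.symm) (Q : Type) [Group Q] [Finite Q] :
    (∃ f : G →* Q, Surjective f) → ∃ f : H →* Q, Surjective f := by
  rintro ⟨f, hf⟩
  haveI hker : f.ker.Normal := f.normal_ker
  have hfin : Finite (G ⧸ f.ker) :=
    Finite.of_equiv Q (QuotientGroup.quotientKerEquivOfSurjective f hf).symm.toEquiv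
  haveI := hfin
  have hFI : f.ker.FiniteIndex := Subgroup.finiteIndex_of_finite_quotient (H := f.ker)
  exact transfer_aux e hec Q ⟨f.ker, hker, hFI⟩
    (QuotientGroup.quotientKerEquivOfSurjective f hf)

end Dense
section Final
variable {G H : Type} [Group G] [Group H]

lemma compat_theta (hG : Group.FG G) (hH : Group.FG H)
    (u : ∀ n, Fobj G H hH n)
    (hu : ∀ {n m : ℕ} (h : n ≤ m), Fmap G H hH h (u m) = u n) :
    Compat hG hH (fun n => (phiOf hG hH n (u n)).toMonoidHom) := by
  intro n m h x
  refine QuotientGroup.induction_on x (fun a => ?_)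
  show transMap (KF H hH m) (KF H hH n) (Kgrp_anti h) ((u m).1 a) = (u n).1 a
  exact congrArg (fun f : Fobj G H hH n => f.1 a) (hu h)

lemma compat_symm {A B : Type} [Group A] [Group B]
    (hA : Group.FG A) (hB : Group.FG B)
    (Φ : ∀ n, (A ⧸ (KF A hA n).1) ≃* (B ⧸ (KF B hB n).1))
    (hΦ : Compat hA hB (fun n => (Φ n).toMonoidHom)) :
    Compat hB hA (fun n => (Φ n).symm.toMonoidHom) := by
  intro n m h y
  show transMap (KF A hA m) (KF A hA n) (Kgrp_anti h) ((Φ m).symm y)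
      = (Φ n).symm (transMap (KF B hB m) (KF B hB n) (Kgrp_anti h) y)
  have h1 := hΦ n m h ((Φ m).symm y)
  have h2 := congrArg (Φ n).symm h1
  simp only [MulEquiv.coe_toMonoidHom] at h2
  rw [MulEquiv.apply_symm_apply, MulEquiv.symm_apply_apply] at h2
  exact h2.symm

end Final

/-- Two finitely generated residually finite groups have isomorphic
profinite completions iff they have the same set of finite quotients. -/
theorem stmt0 (G H : Type) [Group G] [Group H]
    (hGfg : Group.FG G) (hHfg : Group.FG H)
    (hGrf : ResiduallyFinite G) (hHrf : ResiduallyFinite H) :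
    (∃ e : ProfiniteCompletion G ≃* ProfiniteCompletion H,
        Continuous e ∧ Continuous e.symm) ↔ SameFiniteQuotients G H := by
  constructor
  · rintro ⟨e, he, hes⟩
    intro Q _ _
    constructor
    · exact transfer_quot e hes Q
    · refine transfer_quot e.symm ?_ Q
      have h1 : e.symm.symm = e := MulEquiv.symm_symm e
      rw [h1]; exact he
  · intro sfq
    obtain ⟨u, hu⟩ := exists_useq G H hGfg hHfg sfq
    have hθ := compat_theta hGfg hHfg u (fun {n m} h => hu h)
    have hψ := compat_symm hGfg hHfg (fun n => phiOf hGfg hHfg n (u n)) hθ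
    refine ⟨⟨⟨buildHom hGfg hHfg _ hθ, buildHom hHfg hGfg _ hψ, ?_, ?_⟩, ?_⟩, ?_, ?_⟩
    · -- left inverse
      intro x
      apply Subtype.ext
      funext N
      show transMap (KF G hGfg N.1.index) N (KF_le hGfg N)
          ((phiOf hGfg hHfg N.1.index (u N.1.index)).symm.toMonoidHom
            ((buildHom hGfg hHfg _ hθ x).1 (KF H hHfg N.1.index))) = x.1 N
      rw [buildHom_apply]
      simp only [MulEquiv.coe_toMonoidHom, MulEquiv.symm_apply_apply]
      exact x.2 _ N (KF_le hGfg N)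
    · -- right inverse
      intro y
      apply Subtype.ext
      funext N
      show transMap (KF H hHfg N.1.index) N (KF_le hHfg N)
          ((phiOf hGfg hHfg N.1.index (u N.1.index)).toMonoidHom
            ((buildHom hHfg hGfg _ hψ y).1 (KF G hGfg N.1.index))) = y.1 N
      rw [buildHom_apply]
      simp only [MulEquiv.coe_toMonoidHom, MulEquiv.apply_symm_apply]
      exact y.2 _ N (KF_le hHfg N)
    · -- map_mul'
      intro x y
      exact map_mul (buildHom hGfg hHfg _ hθ) x y
    · -- continuity
      exact buildHom_continuous hGfg hHfg _ hθ
    · exact buildHom_continuous hHfg hGfg _ hψ
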